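/- arXiv:hep-th/9406113 — 4 statements merged into one kernel-verified Lean document; each statement's English description precedes it below -/
import Mathlib

section
/- Let G̃ be a group with subgroups G and H such that every element of G̃ factors uniquely as a product u·g with u ∈ H and g ∈ G, and let F₊, F₋ : G̃ → G be group homomorphisms restricting to the identity on G. Define δ : H → G by δ(u) = F₊(u)·F₋(u)⁻¹, and for g ∈ G, u ∈ H define λ_g(u) ∈ H by g·u = λ_g(u)·ρ_g(u) with ρ_g(u) ∈ G. Then the augmentation identity holds: δ(λ_g(u)) = g · δ(u) · g⁻¹ for all g ∈ G and u ∈ H; in other words, H with the right G-action u·g := λ_{g⁻¹}(u) and the map δ is a crossed G-set. -/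
/-! For `δ = ratio F₊ F₋` one has `δ(x·y) = F₊(x)·δ(y)·F₋(x)⁻¹`, so `δ` is unchanged by right
multiplication with an element on which `F₊` and `F₋` agree. Applying this to
`λ_g(u)·ρ_g(u) = g·u` with `g, ρ_g(u) ∈ G` gives `δ(λ_g(u)) = g·δ(u)·g⁻¹`. -/

section Ratio

variable {M K : Type*} [Group M] [Group K] (Fp Fm : M →* K)

def ratio (x : M) : K := Fp x * (Fm x)⁻¹

theorem ratio_mul (x y : M) : ratio Fp Fm (x * y) = Fp x * ratio Fp Fm y * (Fm x)⁻¹ := by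
  simp only [ratio, map_mul, mul_inv_rev, mul_assoc]

theorem ratio_mul_of_eq {y : M} (hy : Fp y = Fm y) (x : M) :
    ratio Fp Fm (x * y) = ratio Fp Fm x := by
  simp only [ratio, map_mul, mul_inv_rev, hy, mul_assoc, mul_inv_cancel_left]

theorem ratio_eq_conj_of_mul_eq_mul {g u l r : M} (hg : Fp g = Fm g) (hr : Fp r = Fm r)
    (h : g * u = l * r) : ratio Fp Fm l = Fp g * ratio Fp Fm u * (Fp g)⁻¹ := by
  rw [← ratio_mul_of_eq Fp Fm hr, ← h, ratio_mul, hg]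

end Ratio

theorem dressing_augmentation_general {Gt : Type*} [Group Gt] (G H : Subgroup Gt)
    (lam : G → H → H) (rho : G → H → G)
    (hfact : ∀ (g : G) (u : H),
      (g : Gt) * (u : Gt) = (lam g u : Gt) * (rho g u : Gt))
    (Fp Fm : Gt →* Gt)
    (hFp_id : ∀ g ∈ G, Fp g = g) (hFm_id : ∀ g ∈ G, Fm g = g) :
    (∀ (g : G) (u : H),
      Fp (lam g u : Gt) * (Fm (lam g u : Gt))⁻¹
        = (g : Gt) * (Fp (u : Gt) * (Fm (u : Gt))⁻¹) * (g : Gt)⁻¹) ∧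
    (∀ (g : G) (u : H),
      Fp (lam g⁻¹ u : Gt) * (Fm (lam g⁻¹ u : Gt))⁻¹
        = (g : Gt)⁻¹ * (Fp (u : Gt) * (Fm (u : Gt))⁻¹) * (g : Gt)) := by
  have hagree : ∀ g ∈ G, Fp g = Fm g := fun g hg => (hFp_id g hg).trans (hFm_id g hg).symm
  have augmentation : ∀ (g : G) (u : H),
      Fp (lam g u : Gt) * (Fm (lam g u : Gt))⁻¹
        = (g : Gt) * (Fp (u : Gt) * (Fm (u : Gt))⁻¹) * (g : Gt)⁻¹ := fun g u => by
    have h := ratio_eq_conj_of_mul_eq_mul Fp Fm (hagree g g.2) (hagree _ (rho g u).2) (hfact g u)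
    rwa [hFp_id g g.2] at h
  exact ⟨augmentation, fun g u => by simpa using augmentation g⁻¹ u⟩

/-- In the group-theoretic model of the double of a quasitriangular Poisson Lie
group, the augmentation identity holds: `δ(λ_g(u)) = g·δ(u)·g⁻¹`, where
`δ(u) = F₊(u)·F₋(u)⁻¹` and `g·u = λ_g(u)·ρ_g(u)`.  Equivalently, `H` with the
right action `u·g := λ_{g⁻¹}(u)` and the map `δ` is a crossed `G`-set. -/
theorem dressing_augmentation {Gt : Type*} [Group Gt] (G H : Subgroup Gt)
    (huniq : ∀ x : Gt, ∃! p : H × G, (p.1 : Gt) * (p.2 : Gt) = x)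
    (lam : G → H → H) (rho : G → H → G)
    (hfact : ∀ (g : G) (u : H),
      (g : Gt) * (u : Gt) = (lam g u : Gt) * (rho g u : Gt))
    (Fp Fm : Gt →* Gt)
    (hFp_mem : ∀ x : Gt, Fp x ∈ G) (hFm_mem : ∀ x : Gt, Fm x ∈ G)
    (hFp_id : ∀ g ∈ G, Fp g = g) (hFm_id : ∀ g ∈ G, Fm g = g) :
    (∀ (g : G) (u : H),
      Fp (lam g u : Gt) * (Fm (lam g u : Gt))⁻¹
        = (g : Gt) * (Fp (u : Gt) * (Fm (u : Gt))⁻¹) * (g : Gt)⁻¹) ∧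
    (∀ (g : G) (u : H),
      Fp (lam g⁻¹ u : Gt) * (Fm (lam g⁻¹ u : Gt))⁻¹
        = (g : Gt)⁻¹ * (Fp (u : Gt) * (Fm (u : Gt))⁻¹) * (g : Gt)) :=
  dressing_augmentation_general G H lam rho hfact Fp Fm hFp_id hFm_id
end

section
/- Let G̃ be a group with subgroups G and H such that every element of G̃ factors uniquely as a product u·g with u ∈ H and g ∈ G, and let F₊, F₋ : G̃ → G be group homomorphisms restricting to the identity on G. Define δ : H → G by δ(u) = F₊(u)·F₋(u)⁻¹ and λ_g(u) ∈ H by g·u = λ_g(u)·ρ_g(u) with ρ_g(u) ∈ G. Then the operation b^a := λ_{δ(a)⁻¹}(b) makes H into a rack: for all a,b ∈ H there is a unique c ∈ H with c^a = b, and (a^b)^c = (a^c)^(b^c) for all a,b,c ∈ H. -/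
/-!
Unique factorization `G̃ = H·G` makes `λ` a left action of `G` on `H`. Applying a homomorphism
`F` that fixes `G` pointwise to `g·u = λ_g(u)·ρ_g(u)` gives `F(λ_g u) = g·F(u)·ρ_g(u)⁻¹`; the
`ρ`-factors cancel in `δ = F₊·F₋⁻¹`, so `δ(λ_g u) = g·δ(u)·g⁻¹`. For any action with such a
conjugation-equivariant map `δ`, the operation `b^a = δ(a)⁻¹ • b` is a rack.
-/

section RackOfEquivariant

variable {G X : Type*} [Group G] [MulAction G X]

theorem existsUnique_smul_eq (g : G) (b : X) : ∃! c : X, g • c = b :=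
  (MulAction.bijective g).existsUnique b

theorem inv_smul_self_distrib (d : X → G) (hd : ∀ (g : G) (x : X), d (g • x) = g * d x * g⁻¹)
    (a b c : X) : (d c)⁻¹ • (d b)⁻¹ • a = (d ((d c)⁻¹ • b))⁻¹ • (d c)⁻¹ • a := by
  rw [hd, smul_smul, smul_smul]
  group

end RackOfEquivariant

namespace DressingAction

variable {Gt : Type*} [Group Gt] {G H : Subgroup Gt}
  (lam : G → H → H) (rho : G → H → G)
  (hfact : ∀ (g : G) (u : H), (g : Gt) * (u : Gt) = (lam g u : Gt) * (rho g u : Gt))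
include hfact

theorem lam_one (huniq : ∀ x : Gt, ∃! p : H × G, (p.1 : Gt) * (p.2 : Gt) = x) (u : H) :
    lam 1 u = u :=
  congrArg Prod.fst <| (huniq (u : Gt)).unique (y₁ := (lam 1 u, rho 1 u)) (y₂ := (u, 1))
    (by rw [← hfact, OneMemClass.coe_one, one_mul]) (mul_one _)

theorem lam_mul (huniq : ∀ x : Gt, ∃! p : H × G, (p.1 : Gt) * (p.2 : Gt) = x)
    (g h : G) (u : H) : lam (g * h) u = lam g (lam h u) := by
  have factor :
      ((g * h : G) : Gt) * u = lam g (lam h u) * ((rho g (lam h u) * rho h u : G) : Gt) := by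
    rw [Subgroup.coe_mul, Subgroup.coe_mul, mul_assoc, hfact h u, ← mul_assoc, hfact g (lam h u),
      mul_assoc]
  exact congrArg Prod.fst <| (huniq _).unique (y₁ := (_, rho (g * h) u)) (y₂ := (_, _))
    (hfact (g * h) u).symm factor.symm

abbrev mulAction (huniq : ∀ x : Gt, ∃! p : H × G, (p.1 : Gt) * (p.2 : Gt) = x) :
    MulAction G H where
  smul := lam
  one_smul := lam_one lam rho hfact huniq
  mul_smul := lam_mul lam rho hfact huniq

theorem map_lam {F : Gt →* Gt} (hF : ∀ g ∈ G, F g = g) (g : G) (u : H) :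
    F (lam g u) = g * F u * (rho g u : Gt)⁻¹ := by
  have h := congrArg F (hfact g u)
  rw [map_mul, map_mul, hF _ g.2, hF _ (rho g u).2] at h
  exact eq_mul_inv_of_mul_eq h.symm

theorem d_lam {Fp Fm : Gt →* Gt} (hFp_id : ∀ g ∈ G, Fp g = g) (hFm_id : ∀ g ∈ G, Fm g = g)
    {d : H → G} (hd : ∀ u : H, (d u : Gt) = Fp (u : Gt) * (Fm (u : Gt))⁻¹) (g : G) (u : H) :
    d (lam g u) = g * d u * g⁻¹ := by
  apply Subtype.ext
  rw [hd, map_lam lam rho hfact hFp_id, map_lam lam rho hfact hFm_id, Subgroup.coe_mul,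
    Subgroup.coe_mul, Subgroup.coe_inv, hd]
  group

end DressingAction

theorem poisson_lie_rack_general {Gt : Type*} [Group Gt] (G H : Subgroup Gt)
    (huniq : ∀ x : Gt, ∃! p : H × G, (p.1 : Gt) * (p.2 : Gt) = x)
    (lam : G → H → H) (rho : G → H → G)
    (hfact : ∀ (g : G) (u : H),
      (g : Gt) * (u : Gt) = (lam g u : Gt) * (rho g u : Gt))
    (Fp Fm : Gt →* Gt)
    (hFp_id : ∀ g ∈ G, Fp g = g) (hFm_id : ∀ g ∈ G, Fm g = g)
    (d : H → G)
    (hd : ∀ u : H, (d u : Gt) = Fp (u : Gt) * (Fm (u : Gt))⁻¹) :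
    (∀ a b : H, ∃! c : H, lam (d a)⁻¹ c = b) ∧
    (∀ a b c : H,
      lam (d c)⁻¹ (lam (d b)⁻¹ a)
        = lam (d (lam (d c)⁻¹ b))⁻¹ (lam (d c)⁻¹ a)) := by
  let _ := DressingAction.mulAction lam rho hfact huniq
  exact ⟨fun a => existsUnique_smul_eq (d a)⁻¹,
    inv_smul_self_distrib d (DressingAction.d_lam lam rho hfact hFp_id hFm_id hd)⟩

/-- Group-theoretic form of the Poisson Lie quandle: with `δ(u) = F₊(u)·F₋(u)⁻¹`
(which lies in `G`) and the dressing action `λ` defined by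
`g·u = λ_g(u)·ρ_g(u)`, the operation `b^a := λ_{δ(a)⁻¹}(b)` makes `H` a rack. -/
theorem poisson_lie_rack {Gt : Type*} [Group Gt] (G H : Subgroup Gt)
    (huniq : ∀ x : Gt, ∃! p : H × G, (p.1 : Gt) * (p.2 : Gt) = x)
    (lam : G → H → H) (rho : G → H → G)
    (hfact : ∀ (g : G) (u : H),
      (g : Gt) * (u : Gt) = (lam g u : Gt) * (rho g u : Gt))
    (Fp Fm : Gt →* Gt)
    (hFp_mem : ∀ x : Gt, Fp x ∈ G) (hFm_mem : ∀ x : Gt, Fm x ∈ G)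
    (hFp_id : ∀ g ∈ G, Fp g = g) (hFm_id : ∀ g ∈ G, Fm g = g)
    (d : H → G)
    (hd : ∀ u : H, (d u : Gt) = Fp (u : Gt) * (Fm (u : Gt))⁻¹) :
    (∀ a b : H, ∃! c : H, lam (d a)⁻¹ c = b) ∧
    (∀ a b c : H,
      lam (d c)⁻¹ (lam (d b)⁻¹ a)
        = lam (d (lam (d c)⁻¹ b))⁻¹ (lam (d c)⁻¹ a)) :=
  poisson_lie_rack_general G H huniq lam rho hfact Fp Fm hFp_id hFm_id d hd
end

section
/- Let Δ be a quandle (a rack satisfying a^a = a for all a), let n ≥ 1, and let f : Δⁿ → Δⁿ be an arbitrary map. Define F : Δ^{n+1} → Δ^{n+1} by F(x₁,…,x_{n+1}) = (y₁,…,y_{n−1}, x_{n+1}, yₙ^{x_{n+1}}), where (y₁,…,yₙ) = f(x₁,…,xₙ) (this is the map of Δ^{n+1} assigned to the braid A·bₙ when f is assigned to A ∈ Bₙ). Then (x₁,…,x_{n+1}) is a fixed point of F if and only if (x₁,…,xₙ) is a fixed point of f and x_{n+1} = xₙ. In particular the fixed point set of F on Δ^{n+1} is in bijection with the fixed point set of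 f on Δⁿ. -/
/-- The map of `Δ^{n+1}` assigned to the positively stabilized braid `A·bₙ`,
when `f : Δⁿ → Δⁿ` is the map assigned to `A ∈ Bₙ`:
`(x₁,…,x_{n+1}) ↦ (y₁,…,y_{n−1}, x_{n+1}, yₙ^{x_{n+1}})` where `y = f(x₁,…,xₙ)`. -/
def posStab {Δ : Type*} (op : Δ → Δ → Δ) {n : ℕ} (hn : 1 ≤ n)
    (f : (Fin n → Δ) → (Fin n → Δ)) (x : Fin (n + 1) → Δ) : Fin (n + 1) → Δ :=
  fun j =>
    if h : (j : ℕ) < n - 1 then f (Fin.init x) ⟨j, by omega⟩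
    else if (j : ℕ) = n - 1 then x (Fin.last n)
    else op (f (Fin.init x) ⟨n - 1, by omega⟩) (x (Fin.last n))

/-! In a quandle `a ^ b = b` forces `a = b`, since `b ^ b = b` and right translations are
injective. Writing the stabilized map as a `Fin.snoc`, the last coordinate of a fixed point
therefore pins `yₙ` to `x_{n+1}`, while the `n`-th coordinate pins `x_{n+1}` to `xₙ`. -/

section

variable {Δ : Type*} {op : Δ → Δ → Δ}

theorem op_left_injective (hinv : ∀ a b : Δ, ∃! c : Δ, op c b = a) (b : Δ) :
    Function.Injective fun a => op a b := fun _ _ h =>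
  (hinv _ b).unique h rfl

theorem op_eq_right_iff (hinv : ∀ a b : Δ, ∃! c : Δ, op c b = a) (hq : ∀ a : Δ, op a a = a)
    {a b : Δ} : op a b = b ↔ a = b := by
  conv_lhs => rhs; rw [← hq b]
  exact (op_left_injective hinv b).eq_iff

variable {n : ℕ} (hn : 1 ≤ n) (f : (Fin n → Δ) → (Fin n → Δ))

theorem posStab_eq_snoc (x : Fin (n + 1) → Δ) :
    posStab op hn f x =
      Fin.snoc (Function.update (f (Fin.init x)) ⟨n - 1, by omega⟩ (x (Fin.last n)))
        (op (f (Fin.init x) ⟨n - 1, by omega⟩) (x (Fin.last n))) := by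
  funext j
  induction j using Fin.lastCases with
  | last =>
    simp only [posStab, Fin.val_last, Fin.snoc_last]
    rw [dif_neg (by omega), if_neg (by omega)]
  | cast i =>
    simp only [posStab, Fin.val_castSucc, Fin.snoc_castSucc, Function.update_apply,
      Fin.ext_iff]
    split_ifs <;> first | rfl | omega

theorem posStab_eq_self_iff (hinv : ∀ a b : Δ, ∃! c : Δ, op c b = a)
    (hq : ∀ a : Δ, op a a = a) (x : Fin (n + 1) → Δ) :
    posStab op hn f x = x ↔
      f (Fin.init x) = Fin.init x ∧
        x (Fin.last n) = x ⟨n - 1, Nat.lt_succ_of_le (Nat.sub_le n 1)⟩ := by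
  set m : Fin n := ⟨n - 1, by omega⟩
  conv_lhs => rw [posStab_eq_snoc]; rhs; rw [← Fin.snoc_init_self x]
  rw [Fin.snoc_inj, Function.update_eq_iff, op_eq_right_iff hinv hq]
  constructor
  · rintro ⟨⟨hlast, hf⟩, hm⟩
    refine ⟨funext fun i => ?_, hlast⟩
    by_cases hi : i = m
    · rw [hi, hm, hlast]
    · exact hf i hi
  · rintro ⟨hf, hlast⟩
    exact ⟨⟨hlast, fun i _ => congrFun hf i⟩, (congrFun hf m).trans hlast.symm⟩

def fixedPointsPosStabEquiv (hinv : ∀ a b : Δ, ∃! c : Δ, op c b = a)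
    (hq : ∀ a : Δ, op a a = a) :
    Function.fixedPoints (posStab op hn f) ≃ Function.fixedPoints f where
  toFun x := ⟨Fin.init x.1, ((posStab_eq_self_iff hn f hinv hq x).1 x.2).1⟩
  invFun y := ⟨Fin.snoc y.1 (y.1 ⟨n - 1, by omega⟩), (posStab_eq_self_iff hn f hinv hq _).2
    ⟨by rw [Fin.init_snoc]; exact y.2,
      by rw [Fin.snoc_last]
         exact (Fin.snoc_castSucc (α := fun _ => Δ) _ y.1 ⟨n - 1, by omega⟩).symm⟩⟩
  left_inv x := Subtype.ext <| by
    conv_rhs => rw [← Fin.snoc_init_self x.1, ((posStab_eq_self_iff hn f hinv hq x).1 x.2).2]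
    rfl
  right_inv y := Subtype.ext (Fin.init_snoc (α := fun _ => Δ) _ _)

end

/-- Markov move (positive stabilization) for quandles: `(x₁,…,x_{n+1})` is a
fixed point of the stabilized map iff `(x₁,…,xₙ)` is a fixed point of `f` and
`x_{n+1} = xₙ`; hence the fixed point sets are in bijection. -/
theorem quandle_positive_markov {Δ : Type*} (op : Δ → Δ → Δ)
    (hinv : ∀ a b : Δ, ∃! c : Δ, op c b = a)
    (hq : ∀ a : Δ, op a a = a)
    {n : ℕ} (hn : 1 ≤ n) (f : (Fin n → Δ) → (Fin n → Δ)) :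
    (∀ x : Fin (n + 1) → Δ,
      posStab op hn f x = x ↔
        (f (Fin.init x) = Fin.init x ∧
          x (Fin.last n) = x ⟨n - 1, by omega⟩)) ∧
    Nonempty
      ({x : Fin (n + 1) → Δ // posStab op hn f x = x} ≃
        {x : Fin n → Δ // f x = x}) :=
  ⟨posStab_eq_self_iff hn f hinv hq, ⟨fixedPointsPosStabEquiv hn f hinv hq⟩⟩
end

section
/- Let 𝔤 be a finite-dimensional Lie algebra over a field k of characteristic zero and let r = Σᵢ aᵢ ⊗ bᵢ ∈ 𝔤 ⊗ 𝔤 satisfy: (1) the classical Yang–Baxter equation [r₁₂, r₁₃] + [r₁₂, r₂₃] + [r₁₃, r₂₃] = 0 in 𝔤 ⊗ 𝔤 ⊗ 𝔤, where [r₁₂, r₁₃] = Σ_{i,j} [aᵢ, aⱼ] ⊗ bᵢ ⊗ bⱼ, [r₁₂, r₂₃] = Σ_{i,j} aᵢ ⊗ [bᵢ, aⱼ] ⊗ bⱼ, [r₁₃, r₂₃] = Σ_{i,j} aᵢ ⊗ aⱼ ⊗ [bᵢ, bⱼ]; and (2) the symmetric part r + P(r) is ad-invariant, i.e. (ad_X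 ⊗ id + id ⊗ ad_X)(r + P(r)) = 0 for all X ∈ 𝔤, where P(x ⊗ y) = y ⊗ x. Define linear maps r₊, r₋ : 𝔤* → 𝔤 by r₊(ξ) = Σᵢ ξ(aᵢ) bᵢ and r₋(ξ) = −Σᵢ ξ(bᵢ) aᵢ, and define a bracket on 𝔤* by [ξ, η]* = ad*_{r₊(ξ)} η − ad*_{r₋(η)} ξ, where (ad*_X ξ)(Y) = −ξ([X, Y]). Then both r₊ and r₋ intertwine the brackets: r₊([ξ, η]*) = [r₊(ξ), r₊(η)] and r₋([ξ, η]*) = [r₋(ξ), r₋(η)] for all ξ, η ∈ 𝔤*. -/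
open TensorProduct

/-- `r₊(ξ) = ⟨r, ξ ⊗ id⟩ = Σᵢ ξ(aᵢ) • bᵢ` for `r = Σᵢ aᵢ ⊗ bᵢ`. -/
noncomputable def rPlus {k L : Type*} [Field k] [LieRing L] [LieAlgebra k L]
    {m : ℕ} (a b : Fin m → L) (ξ : Module.Dual k L) : L :=
  ∑ i, ξ (a i) • b i

/-- `r₋(ξ) = −⟨r, id ⊗ ξ⟩ = −Σᵢ ξ(bᵢ) • aᵢ` for `r = Σᵢ aᵢ ⊗ bᵢ`. -/
noncomputable def rMinus {k L : Type*} [Field k] [LieRing L] [LieAlgebra k L]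
    {m : ℕ} (a b : Fin m → L) (ξ : Module.Dual k L) : L :=
  -∑ i, ξ (b i) • a i

/-- The coadjoint action: `(ad*_X ξ)(Y) = −ξ([X, Y])`. -/
noncomputable def coad {k L : Type*} [Field k] [LieRing L] [LieAlgebra k L]
    (X : L) (ξ : Module.Dual k L) : Module.Dual k L :=
  -(ξ ∘ₗ LieAlgebra.ad k L X)

/-- The induced bracket on `𝔤*`: `[ξ, η]* = ad*_{r₊(ξ)} η − ad*_{r₋(η)} ξ`. -/
noncomputable def dualBracket {k L : Type*} [Field k] [LieRing L] [LieAlgebra k L]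
    {m : ℕ} (a b : Fin m → L) (ξ η : Module.Dual k L) : Module.Dual k L :=
  coad (rPlus a b ξ) η - coad (rMinus a b η) ξ

/-! Each identity is a contraction of the classical Yang–Baxter tensor `[[r, r]]` against `ξ ⊗ η`:
in its first two tensor factors for `r₊`, in its last two for `r₋`. -/

section Contraction

variable {k M : Type*} [CommRing k] [AddCommGroup M] [Module k M]

noncomputable def contract₁₂ (ξ η : Module.Dual k M) : M ⊗[k] (M ⊗[k] M) →ₗ[k] M :=
  TensorProduct.lid k M ∘ₗ map (LinearMap.mul' k k ∘ₗ map ξ η) LinearMap.id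
    ∘ₗ (TensorProduct.assoc k M M M).symm.toLinearMap

noncomputable def contract₂₃ (ξ η : Module.Dual k M) : M ⊗[k] (M ⊗[k] M) →ₗ[k] M :=
  TensorProduct.rid k M ∘ₗ map LinearMap.id (LinearMap.mul' k k ∘ₗ map ξ η)

@[simp] lemma contract₁₂_tmul (ξ η : Module.Dual k M) (x y z : M) :
    contract₁₂ ξ η (x ⊗ₜ[k] (y ⊗ₜ[k] z)) = (ξ x * η y) • z := by
  simp [contract₁₂]

@[simp] lemma contract₂₃_tmul (ξ η : Module.Dual k M) (x y z : M) :
    contract₂₃ ξ η (x ⊗ₜ[k] (y ⊗ₜ[k] z)) = (ξ y * η z) • x := by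
  simp [contract₂₃]

end Contraction

section YangBaxter

variable {k L : Type*} [Field k] [LieRing L] [LieAlgebra k L] {m : ℕ}

/-- `[[r, r]] = [r₁₂, r₁₃] + [r₁₂, r₂₃] + [r₁₃, r₂₃]` for `r = Σᵢ aᵢ ⊗ bᵢ`. -/
noncomputable def classicalYangBaxterTensor (a b : Fin m → L) : L ⊗[k] (L ⊗[k] L) :=
  ∑ i, ∑ j,
    (⁅a i, a j⁆ ⊗ₜ[k] (b i ⊗ₜ[k] b j)
      + a i ⊗ₜ[k] (⁅b i, a j⁆ ⊗ₜ[k] b j)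
      + a i ⊗ₜ[k] (a j ⊗ₜ[k] ⁅b i, b j⁆))

lemma coad_apply (X : L) (ξ : Module.Dual k L) (Y : L) : coad X ξ Y = -ξ ⁅X, Y⁆ := rfl

lemma rPlus_dualBracket (a b : Fin m → L) (ξ η : Module.Dual k L) :
    rPlus a b (dualBracket a b ξ η) =
      ⁅rPlus a b ξ, rPlus a b η⁆ - contract₁₂ ξ η (classicalYangBaxterTensor a b) := by
  simp only [classicalYangBaxterTensor, map_sum, map_add, contract₁₂_tmul, rPlus, rMinus,
    dualBracket, LinearMap.sub_apply, coad_apply, sum_lie, lie_sum, smul_lie, lie_smul, map_neg,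
    map_smul, neg_lie, smul_eq_mul]
  rw [Finset.sum_comm (γ := Fin m)]
  simp only [Finset.sum_smul, Finset.smul_sum, smul_smul, neg_smul, sub_smul, neg_neg,
    ← Finset.sum_neg_distrib, ← Finset.sum_sub_distrib]
  refine Finset.sum_congr rfl fun j _ => Finset.sum_congr rfl fun i _ => ?_
  module

lemma rMinus_dualBracket (a b : Fin m → L) (ξ η : Module.Dual k L) :
    rMinus a b (dualBracket a b ξ η) =
      ⁅rMinus a b ξ, rMinus a b η⁆ - contract₂₃ ξ η (classicalYangBaxterTensor a b) := by
  simp only [rMinus, neg_lie, lie_neg, neg_neg, sum_lie_sum]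
  simp only [classicalYangBaxterTensor, map_sum, map_add, contract₂₃_tmul, rPlus, rMinus,
    dualBracket, LinearMap.sub_apply, coad_apply, sum_lie, smul_lie, lie_smul, map_neg,
    map_smul, neg_lie, smul_eq_mul]
  simp only [Finset.sum_smul, smul_smul, neg_smul, sub_smul, neg_neg,
    ← Finset.sum_neg_distrib, ← Finset.sum_sub_distrib]
  refine Finset.sum_congr rfl fun i _ => Finset.sum_congr rfl fun j _ => ?_
  rw [← lie_skew (b i) (b j), ← lie_skew (b i) (a j), map_neg, map_neg]
  module

end YangBaxter

theorem rPlus_rMinus_lieHom_general {k L : Type*} [Field k]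
    [LieRing L] [LieAlgebra k L]
    {m : ℕ} (a b : Fin m → L)
    (hCYBE : ∑ i, ∑ j,
        (⁅a i, a j⁆ ⊗ₜ[k] (b i ⊗ₜ[k] b j)
          + a i ⊗ₜ[k] (⁅b i, a j⁆ ⊗ₜ[k] b j)
          + a i ⊗ₜ[k] (a j ⊗ₜ[k] ⁅b i, b j⁆))
      = (0 : L ⊗[k] (L ⊗[k] L))) :
    ∀ ξ η : Module.Dual k L,
      rPlus a b (dualBracket a b ξ η) = ⁅rPlus a b ξ, rPlus a b η⁆ ∧
      rMinus a b (dualBracket a b ξ η) = ⁅rMinus a b ξ, rMinus a b η⁆ := by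
  intro ξ η
  have hr : classicalYangBaxterTensor a b = 0 := hCYBE
  simp [rPlus_dualBracket, rMinus_dualBracket, hr]

/-- For a quasitriangular structure `r = Σᵢ aᵢ ⊗ bᵢ` (classical Yang–Baxter
equation plus ad-invariant symmetric part) on a finite-dimensional Lie algebra
over a field of characteristic zero, the maps `r₊, r₋ : 𝔤* → 𝔤` are Lie algebra
homomorphisms for the induced bracket `[ξ, η]* = ad*_{r₊(ξ)} η − ad*_{r₋(η)} ξ`. -/
theorem rPlus_rMinus_lieHom {k L : Type*} [Field k] [CharZero k]
    [LieRing L] [LieAlgebra k L] [FiniteDimensional k L]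
    {m : ℕ} (a b : Fin m → L)
    (hCYBE : ∑ i, ∑ j,
        (⁅a i, a j⁆ ⊗ₜ[k] (b i ⊗ₜ[k] b j)
          + a i ⊗ₜ[k] (⁅b i, a j⁆ ⊗ₜ[k] b j)
          + a i ⊗ₜ[k] (a j ⊗ₜ[k] ⁅b i, b j⁆))
      = (0 : L ⊗[k] (L ⊗[k] L)))
    (hsym : ∀ X : L, ∑ i,
        (⁅X, a i⁆ ⊗ₜ[k] b i + a i ⊗ₜ[k] ⁅X, b i⁆
          + ⁅X, b i⁆ ⊗ₜ[k] a i + b i ⊗ₜ[k] ⁅X, a i⁆)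
      = (0 : L ⊗[k] L)) :
    ∀ ξ η : Module.Dual k L,
      rPlus a b (dualBracket a b ξ η) = ⁅rPlus a b ξ, rPlus a b η⁆ ∧
      rMinus a b (dualBracket a b ξ η) = ⁅rMinus a b ξ, rMinus a b η⁆ :=
  rPlus_rMinus_lieHom_general a b hCYBE
end
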